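/- arXiv:math/9809116 — 3 statements merged into one kernel-verified Lean document; each statement's English description precedes it below -/
import Mathlib

section
/- Let D be a cocomplete, well-powered abelian category and let E ⊆ D be a full subcategory closed under subobjects, quotient objects, and small coproducts (taken in D). Then the inclusion functor E → D has a right adjoint, which sends an object M of D to its largest subobject belonging to E. -/
/-!
The largest subobject of `M` lying in `E` is the supremum of all such subobjects. It lies in `E`
because it is the image of their coproduct, hence a quotient of an object of `E`. A morphism
`X ⟶ M` with `X` in `E` factors through its image, which lies in `E` and so below that supremum;
since the inclusion of the supremum is mono, the factorization is unique, which is exactly the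
hom-set bijection of the adjunction.
-/

open CategoryTheory CategoryTheory.Limits

universe v u

namespace CategoryTheory.ObjectProperty

variable {C : Type u} [Category.{v} C] {P : ObjectProperty C}

section CoreflectionOfMono

variable (R₀ : C → P.FullSubcategory) (ε : ∀ M, (R₀ M).obj ⟶ M) [∀ M, Mono (ε M)]
  (hε : ∀ (X M : C) (f : X ⟶ M), P X → ∃ g : X ⟶ (R₀ M).obj, g ≫ ε M = f)

noncomputable def coreflectionHomEquiv (X : P.FullSubcategory) (M : C) :
    (P.ι.obj X ⟶ M) ≃ (X ⟶ R₀ M) :=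
  (Equiv.ofBijective (fun g : X ⟶ R₀ M => g.hom ≫ ε M)
    ⟨fun _ _ h => ObjectProperty.hom_ext _ ((cancel_mono (ε M)).mp h),
      fun f => let ⟨g, hg⟩ := hε X.obj M f X.property; ⟨ObjectProperty.homMk g, hg⟩⟩).symm

lemma coreflectionHomEquiv_symm_apply (X : P.FullSubcategory) (M : C) (g : X ⟶ R₀ M) :
    (coreflectionHomEquiv R₀ ε hε X M).symm g = g.hom ≫ ε M :=
  rfl

lemma coreflectionHomEquiv_naturality_left (X' X : P.FullSubcategory) (M : C) (f : X' ⟶ X)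
    (g : P.ι.obj X ⟶ M) :
    coreflectionHomEquiv R₀ ε hε X' M (P.ι.map f ≫ g) =
      f ≫ coreflectionHomEquiv R₀ ε hε X M g := by
  rw [← Equiv.eq_symm_apply, coreflectionHomEquiv_symm_apply, InducedCategory.comp_hom,
    Category.assoc, ← coreflectionHomEquiv_symm_apply R₀ ε hε, Equiv.symm_apply_apply]
  rfl

noncomputable def coreflectionAdjunction :
    P.ι ⊣ Adjunction.rightAdjointOfEquiv _ (coreflectionHomEquiv_naturality_left R₀ ε hε) :=
  Adjunction.adjunctionOfEquivRight _ _

lemma coreflectionAdjunction_counit_app (M : C) :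
    (coreflectionAdjunction R₀ ε hε).counit.app M = ε M :=
  Category.id_comp _

end CoreflectionOfMono

section Quotients

variable [HasImages C] [HasEqualizers C] [P.IsClosedUnderQuotients]

lemma prop_imageSubobject {X M : C} (f : X ⟶ M) (hX : P X) : P (imageSubobject f : C) :=
  P.prop_of_epi (factorThruImageSubobject f) hX

end Quotients

section LargestSubobject

/- The universe of `Subobject.sSup` is not determined by its type, so it is given explicitly
rather than left to the `SupSet` instance. -/
variable [WellPowered.{v} C] [HasCoproducts.{v} C] [HasImages C]

variable (P) in
noncomputable def largestSubobject (M : C) : Subobject M :=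
  Subobject.sSup.{v} {S | P (S : C)}

variable [HasEqualizers C] [P.IsClosedUnderQuotients]

lemma prop_sSup_subobject (hcoprod : ∀ (ι : Type v) (X : ι → C), (∀ i, P (X i)) → P (∐ X))
    {M : C} (s : Set (Subobject M)) (hs : ∀ S ∈ s, P (S : C)) : P (Subobject.sSup.{v} s : C) :=
  prop_imageSubobject (Subobject.smallCoproductDesc.{v} s) <| hcoprod _ _ fun j =>
    hs _ ((Subobject.symm_apply_mem_iff_mem_image _ _ _).2 j.2)

lemma prop_largestSubobject (hcoprod : ∀ (ι : Type v) (X : ι → C), (∀ i, P (X i)) → P (∐ X))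
    (M : C) : P (largestSubobject P M : C) :=
  prop_sSup_subobject hcoprod _ fun _ hS => hS

lemma factors_largestSubobject {X M : C} (f : X ⟶ M) (hX : P X) :
    (largestSubobject P M).Factors f :=
  Subobject.factors_of_le f (Subobject.le_sSup.{v} _ _ (prop_imageSubobject f hX))
    ((Subobject.factors_iff _ _).2 ⟨_, imageSubobject_arrow_comp f⟩)

end LargestSubobject

end CategoryTheory.ObjectProperty

theorem stmt4_general {D : Type u} [Category.{v} D] [Abelian D] [HasColimits D] [WellPowered.{v} D]
    (P : D → Prop)
    (hquot : ∀ (X Y : D) (f : X ⟶ Y), Epi f → P X → P Y)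
    (hcoprod : ∀ (ι : Type v) (X : ι → D), (∀ i, P (X i)) → P (∐ X)) :
    ∃ (R : D ⥤ ObjectProperty.FullSubcategory P) (adj : ObjectProperty.ι P ⊣ R),
      ∀ M : D, Mono (adj.counit.app M) ∧
        ∀ (S : D) (f : S ⟶ M), P S → Mono f →
          ∃ g : S ⟶ (R.obj M).obj, g ≫ adj.counit.app M = f := by
  have : ObjectProperty.IsClosedUnderQuotients P := ⟨fun f _ hX => hquot _ _ f inferInstance hX⟩
  have hε (X M : D) (f : X ⟶ M) (hX : P X) :
      ∃ g : X ⟶ (ObjectProperty.largestSubobject P M : D),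
        g ≫ (ObjectProperty.largestSubobject P M).arrow = f :=
    (Subobject.factors_iff _ _).1 (ObjectProperty.factors_largestSubobject f hX)
  refine ⟨_, ObjectProperty.coreflectionAdjunction
    (fun M => ⟨_, ObjectProperty.prop_largestSubobject hcoprod M⟩) _ hε, fun M => ?_⟩
  rw [ObjectProperty.coreflectionAdjunction_counit_app]
  exact ⟨inferInstance, fun S f hS _ => hε S M f hS⟩

/-- Let `D` be a cocomplete, well-powered abelian category and `E ⊆ D` a full subcategory
closed under subobjects, quotients and small coproducts.  Then the inclusion `E ⥤ D` has a
right adjoint, sending an object `M` to its largest subobject belonging to `E`. -/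
theorem stmt4 {D : Type u} [Category.{v} D] [Abelian D] [HasColimits D] [WellPowered.{v} D]
    (P : D → Prop)
    (hsub : ∀ (X Y : D) (f : X ⟶ Y), Mono f → P Y → P X)
    (hquot : ∀ (X Y : D) (f : X ⟶ Y), Epi f → P X → P Y)
    (hcoprod : ∀ (ι : Type v) (X : ι → D), (∀ i, P (X i)) → P (∐ X)) :
    ∃ (R : D ⥤ ObjectProperty.FullSubcategory P) (adj : ObjectProperty.ι P ⊣ R),
      ∀ M : D, Mono (adj.counit.app M) ∧
        ∀ (S : D) (f : S ⟶ M), P S → Mono f →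
          ∃ g : S ⟶ (R.obj M).obj, g ≫ adj.counit.app M = f :=
  stmt4_general P hquot hcoprod
end

section
/- Let R = ⊕_{n≥0} R_n be an ℕ-graded ring and let t ∈ R₁ be a central homogeneous element of degree 1 that is a non-zero-divisor in R. If R/tR is right noetherian, then R is right noetherian. -/
open DirectSum MulOpposite

section Stmt8Aux

variable {R : Type*} [Ring R] (𝒜 : ℕ → AddSubgroup R) [GradedRing 𝒜]

/-- A right ideal (submodule of `R` over `Rᵐᵒᵖ`) is homogeneous. -/
def Stmt8Hom (I : Submodule Rᵐᵒᵖ R) : Prop :=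
  ∀ x ∈ I, ∀ d : ℕ, GradedRing.proj 𝒜 d x ∈ I

theorem stmt8_hom_span (s : Set R) (hs : ∀ x ∈ s, ∃ e, x ∈ 𝒜 e) :
    Stmt8Hom 𝒜 (Submodule.span Rᵐᵒᵖ s) := by
  classical
  intro x hx d
  obtain ⟨c, hsupp, rfl⟩ := Submodule.mem_span_set.mp hx
  rw [Finsupp.sum, map_sum]
  refine Submodule.sum_mem _ fun m hm => ?_
  obtain ⟨e, he⟩ := hs m (hsupp hm)
  rw [MulOpposite.smul_eq_mul_unop, GradedRing.proj_apply]
  by_cases hle : e ≤ d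
  · rw [DirectSum.coe_decompose_mul_of_left_mem_of_le 𝒜 he hle]
    have := Submodule.smul_mem (Submodule.span Rᵐᵒᵖ s)
      (op ((DirectSum.decompose 𝒜 ((c m).unop) (d - e) : R)))
      (Submodule.subset_span (hsupp hm))
    simpa [op_smul_eq_mul] using this
  · rw [DirectSum.coe_decompose_mul_of_left_mem_of_not_le 𝒜 he hle]
    exact zero_mem _

theorem stmt8_mem_T {t x : R} :
    x ∈ Submodule.span Rᵐᵒᵖ ({t} : Set R) ↔ ∃ r, x = t * r := by
  rw [Submodule.mem_span_singleton]
  constructor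
  · rintro ⟨a, rfl⟩; exact ⟨a.unop, rfl⟩
  · rintro ⟨r, rfl⟩; exact ⟨op r, rfl⟩

variable {R : Type*} [Ring R] (𝒜 : ℕ → AddSubgroup R) [GradedRing 𝒜]

theorem stmt8_pow_comm {t : R} (htc : ∀ r : R, t * r = r * t) (k : ℕ) (x : R) :
    t ^ k * x = x * t ^ k :=
  ((show Commute t x from htc x).pow_left k).eq

/-- `{b | tⁿ b ∈ I}` as a right ideal. -/
def stmt8J (I : Submodule Rᵐᵒᵖ R) (t : R) (n : ℕ) : Submodule Rᵐᵒᵖ R where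
  carrier := {b | t ^ n * b ∈ I}
  add_mem' := fun {a b} ha hb => by
    simpa [mul_add] using I.add_mem ha hb
  zero_mem' := by simp
  smul_mem' := fun c x hx => by
    show t ^ n * (x * c.unop) ∈ I
    rw [← mul_assoc]
    exact I.smul_mem c hx

theorem stmt8J_mem {I : Submodule Rᵐᵒᵖ R} {t : R} {n : ℕ} {b : R} :
    b ∈ stmt8J I t n ↔ t ^ n * b ∈ I := Iff.rfl

theorem stmt8J_mono {I : Submodule Rᵐᵒᵖ R} {t : R} (htc : ∀ r : R, t * r = r * t)
    {n m : ℕ} (h : n ≤ m) : stmt8J I t n ≤ stmt8J I t m := by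
  intro b hb
  rw [stmt8J_mem] at hb ⊢
  obtain ⟨k, rfl⟩ := Nat.exists_eq_add_of_le h
  have e : t ^ (n + k) * b = (t ^ n * b) * t ^ k := by
    rw [pow_add, mul_assoc, stmt8_pow_comm htc k b, ← mul_assoc]
  rw [e]
  exact I.smul_mem (op (t ^ k)) hb

theorem stmt8J_hom {I : Submodule Rᵐᵒᵖ R} (hI : Stmt8Hom 𝒜 I) {t : R} (ht : t ∈ 𝒜 1)
    (n : ℕ) : Stmt8Hom 𝒜 (stmt8J I t n) := by
  intro b hb d
  rw [stmt8J_mem] at hb ⊢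
  have htn : t ^ n ∈ 𝒜 n := by simpa using SetLike.pow_mem_graded n ht
  have e : t ^ n * GradedRing.proj 𝒜 d b = GradedRing.proj 𝒜 (n + d) (t ^ n * b) := by
    rw [GradedRing.proj_apply, GradedRing.proj_apply,
      DirectSum.coe_decompose_mul_add_of_left_mem 𝒜 htn]
  rw [e]
  exact hI _ hb _

theorem stmt8_hom_sup {I J : Submodule Rᵐᵒᵖ R} (hI : Stmt8Hom 𝒜 I) (hJ : Stmt8Hom 𝒜 J) :
    Stmt8Hom 𝒜 (I ⊔ J) := by
  intro x hx d
  obtain ⟨y, hy, z, hz, rfl⟩ := Submodule.mem_sup.mp hx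
  rw [map_add]
  exact Submodule.add_mem_sup (hI y hy d) (hJ z hz d)
theorem stmt8_hom_gens {t : R}
    (H1 : ∀ K : Submodule Rᵐᵒᵖ R, Submodule.span Rᵐᵒᵖ ({t} : Set R) ≤ K →
      ∃ F : Finset R, (F : Set R) ⊆ K ∧
        K ≤ Submodule.span Rᵐᵒᵖ (F : Set R) ⊔ Submodule.span Rᵐᵒᵖ ({t} : Set R))
    (J : Submodule Rᵐᵒᵖ R) (hJ : Stmt8Hom 𝒜 J) :
    ∃ F : Finset R, (∀ f ∈ F, f ∈ J ∧ ∃ e : ℕ, f ∈ 𝒜 e) ∧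
      J ⊔ Submodule.span Rᵐᵒᵖ ({t} : Set R) ≤
        Submodule.span Rᵐᵒᵖ (F : Set R) ⊔ Submodule.span Rᵐᵒᵖ ({t} : Set R) := by
  classical
  set T := Submodule.span Rᵐᵒᵖ ({t} : Set R) with hT
  obtain ⟨F', hF'sub, hF'span⟩ := H1 (J ⊔ T) le_sup_right
  have hsplit : ∀ f ∈ F', ∃ z, z ∈ J ∧ f - z ∈ T := by
    intro f hf
    obtain ⟨z, hz, v, hv, hzv⟩ := Submodule.mem_sup.mp (hF'sub hf)
    exact ⟨z, hz, by rw [← hzv]; simpa using hv⟩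
  choose! u hu1 hu2 using hsplit
  set F : Finset R := F'.biUnion (fun f =>
    (DirectSum.decompose 𝒜 (u f)).support.image fun d => GradedRing.proj 𝒜 d (u f)) with hF
  refine ⟨F, ?_, ?_⟩
  · intro g hg
    obtain ⟨f, hf, hg⟩ := Finset.mem_biUnion.mp hg
    obtain ⟨d, _, rfl⟩ := Finset.mem_image.mp hg
    exact ⟨hJ _ (hu1 f hf) d, d, by rw [GradedRing.proj_apply]; exact SetLike.coe_mem _⟩
  · refine hF'span.trans (sup_le ?_ le_sup_right)
    rw [Submodule.span_le]
    intro f hf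
    have hf' : f ∈ F' := hf
    have huf : u f ∈ Submodule.span Rᵐᵒᵖ (F : Set R) := by
      have hrep : u f = ∑ d ∈ (DirectSum.decompose 𝒜 (u f)).support,
          GradedRing.proj 𝒜 d (u f) := by
        simpa [GradedRing.proj_apply] using (DirectSum.sum_support_decompose 𝒜 (u f)).symm
      rw [hrep]
      refine Submodule.sum_mem _ fun d hd => Submodule.subset_span ?_
      exact Finset.mem_biUnion.mpr ⟨f, hf', Finset.mem_image.mpr ⟨d, hd, rfl⟩⟩
    have hfe : f = u f + (f - u f) := by abel
    rw [SetLike.mem_coe, hfe]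
    exact Submodule.add_mem _ (Submodule.mem_sup_left huf)
      (Submodule.mem_sup_right (hu2 f hf'))
theorem stmt8_graded_fg {t : R} (ht : t ∈ 𝒜 1) (htc : ∀ r : R, t * r = r * t)
    (H1 : ∀ K : Submodule Rᵐᵒᵖ R, Submodule.span Rᵐᵒᵖ ({t} : Set R) ≤ K →
      ∃ F : Finset R, (F : Set R) ⊆ K ∧
        K ≤ Submodule.span Rᵐᵒᵖ (F : Set R) ⊔ Submodule.span Rᵐᵒᵖ ({t} : Set R))
    (H2 : ∀ c : ℕ →o Submodule Rᵐᵒᵖ R, (∀ n, Submodule.span Rᵐᵒᵖ ({t} : Set R) ≤ c n) →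
      ∃ N : ℕ, ∀ n, N ≤ n → c n = c N)
    (I : Submodule Rᵐᵒᵖ R) (hI : Stmt8Hom 𝒜 I) : I.FG := by
  classical
  set T := Submodule.span Rᵐᵒᵖ ({t} : Set R) with hT
  set K : ℕ →o Submodule Rᵐᵒᵖ R :=
    ⟨fun n => stmt8J I t n ⊔ T, fun n m h => sup_le_sup_right (stmt8J_mono htc h) T⟩ with hK
  obtain ⟨N, hN⟩ := H2 K (fun n => le_sup_right)
  choose F hFmem hFspan using fun n =>
    stmt8_hom_gens 𝒜 H1 (stmt8J I t n) (stmt8J_hom 𝒜 hI ht n)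
  set X : Finset R := (Finset.range (N + 1)).biUnion
    (fun m => (F m).image fun f => t ^ m * f) with hX
  have hXmem : ∀ m, m ≤ N → ∀ f ∈ F m, t ^ m * f ∈ X := by
    intro m hm f hf
    exact Finset.mem_biUnion.mpr ⟨m, Finset.mem_range.mpr (Nat.lt_succ_of_le hm),
      Finset.mem_image.mpr ⟨f, hf, rfl⟩⟩
  have hXI : Submodule.span Rᵐᵒᵖ (X : Set R) ≤ I := by
    rw [Submodule.span_le]
    intro g hg
    obtain ⟨m, hm, hg⟩ := Finset.mem_biUnion.mp hg
    obtain ⟨f, hf, rfl⟩ := Finset.mem_image.mp hg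
    exact (hFmem m f hf).1
  have key : ∀ d : ℕ, ∀ b ∈ 𝒜 d, ∀ n : ℕ, t ^ n * b ∈ I →
      t ^ n * b ∈ Submodule.span Rᵐᵒᵖ (X : Set R) := by
    intro d
    induction d using Nat.strong_induction_on with
    | _ d IH =>
    intro b hb n hbn
    have hbK : ∃ m, m ≤ n ∧ m ≤ N ∧
        b ∈ Submodule.span Rᵐᵒᵖ ((F m : Finset R) : Set R) ⊔ T := by
      have hbJ : b ∈ stmt8J I t n := hbn
      rcases le_total n N with h | h
      · exact ⟨n, le_refl n, h, hFspan n (Submodule.mem_sup_left hbJ)⟩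
      · have hKn : stmt8J I t n ⊔ T = stmt8J I t N ⊔ T := hN n h
        have hbKN : b ∈ stmt8J I t N ⊔ T := hKn ▸ (Submodule.mem_sup_left hbJ)
        exact ⟨N, h, le_refl N, hFspan N hbKN⟩
    obtain ⟨m, hmn, hmN, hbK⟩ := hbK
    obtain ⟨p, hp, q, hq, hpq⟩ := Submodule.mem_sup.mp hbK
    obtain ⟨cf, -, hcf⟩ := Submodule.mem_span_finset.mp hp
    obtain ⟨a, ha⟩ := stmt8_mem_T.mp hq
    have hbrep : b = (∑ f ∈ F m, GradedRing.proj 𝒜 d (cf f • f))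
        + GradedRing.proj 𝒜 d (t * a) := by
      have hbp : b = GradedRing.proj 𝒜 d b := by
        rw [GradedRing.proj_apply, DirectSum.decompose_of_mem_same 𝒜 hb]
      conv_lhs => rw [hbp]
      rw [← hpq, map_add, ← hcf, map_sum, ha]
    have hy : (∑ f ∈ F m, t ^ n * GradedRing.proj 𝒜 d (cf f • f))
        ∈ Submodule.span Rᵐᵒᵖ (X : Set R) := by
      refine Submodule.sum_mem _ fun f hf => ?_
      obtain ⟨hfJ, e, he⟩ := hFmem m f hf
      rw [MulOpposite.smul_eq_mul_unop, GradedRing.proj_apply]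
      by_cases hle : e ≤ d
      · rw [DirectSum.coe_decompose_mul_of_left_mem_of_le 𝒜 he hle]
        set s : R := (DirectSum.decompose 𝒜 ((cf f).unop) (d - e) : R) with hs
        have h1 : t ^ n = t ^ m * t ^ (n - m) := by
          rw [← pow_add, Nat.add_sub_cancel' hmn]
        have h2 : t ^ n * (f * s) = (t ^ m * f) * (s * t ^ (n - m)) := by
          calc t ^ n * (f * s) = t ^ m * (t ^ (n - m) * (f * s)) := by
                rw [h1, mul_assoc]
            _ = t ^ m * ((f * s) * t ^ (n - m)) := by
                rw [stmt8_pow_comm htc (n - m) (f * s)]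
            _ = (t ^ m * f) * (s * t ^ (n - m)) := by
                rw [mul_assoc f s (t ^ (n - m)), ← mul_assoc (t ^ m) f (s * t ^ (n - m))]
        rw [h2]
        have := Submodule.smul_mem (Submodule.span Rᵐᵒᵖ (X : Set R))
          (op (s * t ^ (n - m))) (Submodule.subset_span (hXmem m hmN f hf))
        simpa [op_smul_eq_mul] using this
      · rw [DirectSum.coe_decompose_mul_of_left_mem_of_not_le 𝒜 he hle, mul_zero]
        exact zero_mem _
    have hsplitmul : t ^ n * b = (∑ f ∈ F m, t ^ n * GradedRing.proj 𝒜 d (cf f • f))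
        + t ^ n * GradedRing.proj 𝒜 d (t * a) := by
      conv_lhs => rw [hbrep]
      rw [mul_add, Finset.mul_sum]
    rcases Nat.eq_zero_or_eq_succ_pred d with hd0 | hds
    · subst hd0
      have hz : GradedRing.proj 𝒜 0 (t * a) = 0 := by
        rw [GradedRing.proj_apply]
        exact DirectSum.coe_decompose_mul_of_left_mem_of_not_le 𝒜 ht (by omega)
      rw [hsplitmul, hz, mul_zero, add_zero]
      exact hy
    · set e' := d - 1 with he'
      have hd : d = e' + 1 := hds
      have hz : GradedRing.proj 𝒜 d (t * a) = t * (DirectSum.decompose 𝒜 a e' : R) := by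
        rw [GradedRing.proj_apply, DirectSum.coe_decompose_mul_of_left_mem_of_le 𝒜 ht
          (by omega : 1 ≤ d)]
      set c1 : R := (DirectSum.decompose 𝒜 a e' : R) with hc1
      have hzz : t ^ n * GradedRing.proj 𝒜 d (t * a) = t ^ (n + 1) * c1 := by
        rw [hz, pow_succ, mul_assoc]
      have hzI : t ^ (n + 1) * c1 ∈ I := by
        have hzeq : t ^ n * GradedRing.proj 𝒜 d (t * a)
            = t ^ n * b - ∑ f ∈ F m, t ^ n * GradedRing.proj 𝒜 d (cf f • f) :=
          eq_sub_of_add_eq' hsplitmul.symm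
        rw [← hzz, hzeq]
        exact Submodule.sub_mem I hbn (hXI hy)
      have hzmem : t ^ (n + 1) * c1 ∈ Submodule.span Rᵐᵒᵖ (X : Set R) :=
        IH e' (by omega) c1 (SetLike.coe_mem _) (n + 1) hzI
      rw [hsplitmul, hzz]
      exact Submodule.add_mem _ hy hzmem
  refine ⟨X, le_antisymm hXI ?_⟩
  intro x hx
  have hxr : x = ∑ i ∈ (DirectSum.decompose 𝒜 x).support, GradedRing.proj 𝒜 i x := by
    simpa [GradedRing.proj_apply] using (DirectSum.sum_support_decompose 𝒜 x).symm
  rw [hxr]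
  refine Submodule.sum_mem _ fun d _ => ?_
  have h0 : t ^ 0 * GradedRing.proj 𝒜 d x = GradedRing.proj 𝒜 d x := by
    rw [pow_zero, one_mul]
  have hres := key d (GradedRing.proj 𝒜 d x)
    (by rw [GradedRing.proj_apply]; exact SetLike.coe_mem _) 0
    (by rw [h0]; exact hI x hx d)
  rwa [h0] at hres
theorem stmt8_all_fg (hgr : ∀ J : Submodule Rᵐᵒᵖ R, Stmt8Hom 𝒜 J → J.FG)
    (I : Submodule Rᵐᵒᵖ R) : I.FG := by
  classical
  set Lset : Set R := {v | ∃ x, x ∈ I ∧ ∃ d : ℕ,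
    (∀ k, d < k → GradedRing.proj 𝒜 k x = 0) ∧ GradedRing.proj 𝒜 d x = v} with hLset
  have hLhom : ∀ v ∈ Lset, ∃ e, v ∈ 𝒜 e := by
    rintro v ⟨x, hx, d, hk, rfl⟩
    exact ⟨d, by rw [GradedRing.proj_apply]; exact SetLike.coe_mem _⟩
  obtain ⟨Y, hY⟩ := hgr (Submodule.span Rᵐᵒᵖ Lset) (stmt8_hom_span 𝒜 Lset hLhom)
  have hYL : ∀ y ∈ Y, (y : R) ∈ Submodule.span Rᵐᵒᵖ Lset := fun y hy =>
    hY ▸ Submodule.subset_span (Finset.mem_coe.mpr hy)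
  choose! c hc1 hc2 using fun y hy => Submodule.mem_span_set.mp (hYL y hy)
  set X : Finset R := Y.biUnion (fun y => (c y).support) with hX
  have hXL : (X : Set R) ⊆ Lset := by
    intro u hu
    obtain ⟨y, hy, hu⟩ := Finset.mem_biUnion.mp hu
    exact hc1 y hy hu
  have hLX : Submodule.span Rᵐᵒᵖ (X : Set R) = Submodule.span Rᵐᵒᵖ Lset := by
    refine le_antisymm (Submodule.span_mono hXL) ?_
    rw [← hY, Submodule.span_le]
    intro y hy
    rw [SetLike.mem_coe, ← hc2 y hy, Finsupp.sum]
    refine Submodule.sum_mem _ fun u hu => Submodule.smul_mem _ _ (Submodule.subset_span ?_)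
    exact Finset.mem_coe.mpr (Finset.mem_biUnion.mpr ⟨y, hy, hu⟩)
  have hdata : ∀ u ∈ X, ∃ x, x ∈ I ∧ ∃ d : ℕ,
      (∀ k, d < k → GradedRing.proj 𝒜 k x = 0) ∧ GradedRing.proj 𝒜 d x = u :=
    fun u hu => hXL hu
  choose! wit hwitI deg hvan hproj using hdata
  have hudeg : ∀ u ∈ X, u ∈ 𝒜 (deg u) := by
    intro u hu
    have h2 := hproj u hu
    rw [GradedRing.proj_apply] at h2
    have h3 : (DirectSum.decompose 𝒜 (wit u) (deg u) : R) ∈ 𝒜 (deg u) := SetLike.coe_mem _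
    rwa [h2] at h3
  set W : Finset R := X.image wit with hW
  have hWI : Submodule.span Rᵐᵒᵖ (W : Set R) ≤ I := by
    rw [Submodule.span_le]
    intro w hw
    obtain ⟨u, hu, rfl⟩ := Finset.mem_image.mp hw
    exact hwitI u hu
  have main : ∀ D : ℕ, ∀ x, x ∈ I → (∀ k, D ≤ k → GradedRing.proj 𝒜 k x = 0) →
      x ∈ Submodule.span Rᵐᵒᵖ (W : Set R) := by
    intro D
    induction D with
    | zero =>
      intro x hx h0
      have hx0 : x = 0 := by
        have hxr : x = ∑ i ∈ (DirectSum.decompose 𝒜 x).support, GradedRing.proj 𝒜 i x := by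
          simpa [GradedRing.proj_apply] using (DirectSum.sum_support_decompose 𝒜 x).symm
        rw [hxr]
        exact Finset.sum_eq_zero fun i _ => h0 i (Nat.zero_le i)
      exact hx0 ▸ zero_mem _
    | succ D IH =>
      intro x hx hvanx
      have hvL : GradedRing.proj 𝒜 D x ∈ Lset :=
        ⟨x, hx, D, fun k hk => hvanx k hk, rfl⟩
      have hvX : GradedRing.proj 𝒜 D x ∈ Submodule.span Rᵐᵒᵖ (X : Set R) :=
        hLX ▸ Submodule.subset_span hvL
      obtain ⟨r, -, hr⟩ := Submodule.mem_span_finset.mp hvX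
      set y : R := ∑ u ∈ X, (if deg u ≤ D then
        wit u * (DirectSum.decompose 𝒜 ((r u).unop) (D - deg u) : R) else 0) with hy
      have hyW : y ∈ Submodule.span Rᵐᵒᵖ (W : Set R) := by
        refine Submodule.sum_mem _ fun u hu => ?_
        by_cases hle : deg u ≤ D
        · rw [if_pos hle]
          have hwitW : wit u ∈ (W : Set R) :=
            Finset.mem_coe.mpr (Finset.mem_image.mpr ⟨u, hu, rfl⟩)
          have := Submodule.smul_mem (Submodule.span Rᵐᵒᵖ (W : Set R))
            (op ((DirectSum.decompose 𝒜 ((r u).unop) (D - deg u) : R)))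
            (Submodule.subset_span hwitW)
          simpa [op_smul_eq_mul] using this
        · rw [if_neg hle]
          exact zero_mem _
      -- projections of y in degrees ≥ D
      have hyk : ∀ k, D < k → GradedRing.proj 𝒜 k y = 0 := by
        intro k hk
        rw [hy, map_sum]
        refine Finset.sum_eq_zero fun u hu => ?_
        by_cases hle : deg u ≤ D
        · rw [if_pos hle, GradedRing.proj_apply,
            DirectSum.coe_decompose_mul_of_right_mem_of_le 𝒜 (SetLike.coe_mem _)
              (le_trans (Nat.sub_le _ _) (le_of_lt hk))]
          have hvank : (DirectSum.decompose 𝒜 (wit u) (k - (D - deg u)) : R) = 0 := by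
            have : deg u < k - (D - deg u) := by omega
            have h2 := hvan u hu (k - (D - deg u)) this
            rwa [GradedRing.proj_apply] at h2
          rw [hvank, zero_mul]
        · rw [if_neg hle]
          exact map_zero _
      have hyD : GradedRing.proj 𝒜 D y = GradedRing.proj 𝒜 D x := by
        have hvmem : GradedRing.proj 𝒜 D x ∈ 𝒜 D := by
          rw [GradedRing.proj_apply]; exact SetLike.coe_mem _
        have hvproj : GradedRing.proj 𝒜 D (GradedRing.proj 𝒜 D x) = GradedRing.proj 𝒜 D x := by
          rw [GradedRing.proj_apply, DirectSum.decompose_of_mem_same 𝒜 hvmem]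
        calc GradedRing.proj 𝒜 D y
            = ∑ u ∈ X, (if deg u ≤ D then
                u * (DirectSum.decompose 𝒜 ((r u).unop) (D - deg u) : R) else 0) := by
              rw [hy, map_sum]
              refine Finset.sum_congr rfl fun u hu => ?_
              by_cases hle : deg u ≤ D
              · rw [if_pos hle, if_pos hle, GradedRing.proj_apply,
                  DirectSum.coe_decompose_mul_of_right_mem_of_le 𝒜 (SetLike.coe_mem _)
                    (Nat.sub_le _ _)]
                have : D - (D - deg u) = deg u := by omega
                rw [this]
                have h2 := hproj u hu
                rw [GradedRing.proj_apply] at h2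
                rw [h2]
              · rw [if_neg hle, if_neg hle]
                exact map_zero _
          _ = GradedRing.proj 𝒜 D x := by
              conv_rhs => rw [← hvproj]
              conv_rhs => rw [← hr]
              rw [map_sum]
              refine (Finset.sum_congr rfl fun u hu => ?_).symm
              rw [MulOpposite.smul_eq_mul_unop, GradedRing.proj_apply,
                DirectSum.coe_decompose_mul_of_left_mem 𝒜 D (hudeg u hu)]
      have hsub : ∀ k, D ≤ k → GradedRing.proj 𝒜 k (x - y) = 0 := by
        intro k hk
        rcases eq_or_lt_of_le hk with rfl | hlt
        · rw [map_sub, hyD, sub_self]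
        · rw [map_sub, hyk k hlt, hvanx k hlt, sub_zero]
      have hxy : x - y ∈ Submodule.span Rᵐᵒᵖ (W : Set R) :=
        IH (x - y) (Submodule.sub_mem I hx (hWI hyW)) hsub
      have : x = (x - y) + y := by abel
      rw [this]
      exact Submodule.add_mem _ hxy hyW
  refine ⟨W, le_antisymm hWI fun x hx => ?_⟩
  refine main (((DirectSum.decompose 𝒜 x).support.sup id) + 1) x hx fun k hk => ?_
  by_contra hne
  have hks : k ∈ (DirectSum.decompose 𝒜 x).support := by
    rw [DFinsupp.mem_support_iff]
    intro h0
    apply hne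
    rw [GradedRing.proj_apply, h0]
    rfl
  have hles : k ≤ (DirectSum.decompose 𝒜 x).support.sup id := Finset.le_sup (f := id) hks
  omega
end Stmt8Aux
section Glue
variable {R : Type*} [Ring R]

theorem stmt8_mem_tsi {t : R} (htc : ∀ r : R, t * r = r * t) {x : R} :
    x ∈ TwoSidedIdeal.span ({t} : Set R) ↔ ∃ r, x = t * r := by
  constructor
  · intro hx
    let Itr : TwoSidedIdeal R := TwoSidedIdeal.mk' {x | ∃ r, x = t * r}
      ⟨0, by rw [mul_zero]⟩
      (fun {a b} ha hb => by
        obtain ⟨r, hr⟩ := ha; obtain ⟨s, hs⟩ := hb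
        exact ⟨r + s, by rw [hr, hs, mul_add]⟩)
      (fun {a} ha => by
        obtain ⟨r, hr⟩ := ha
        exact ⟨-r, by rw [hr, mul_neg]⟩)
      (fun {a b} hb => by
        obtain ⟨r, hr⟩ := hb
        exact ⟨a * r, by rw [hr, ← mul_assoc, ← htc a, mul_assoc]⟩)
      (fun {a b} ha => by
        obtain ⟨r, hr⟩ := ha
        exact ⟨r * b, by rw [hr, mul_assoc]⟩)
    have hsub : ({t} : Set R) ⊆ (Itr : Set R) := by
      intro s hs
      rw [Set.mem_singleton_iff] at hs
      subst hs
      rw [SetLike.mem_coe, TwoSidedIdeal.mem_mk']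
      exact ⟨1, (mul_one _).symm⟩
    have hmem := TwoSidedIdeal.mem_span_iff.mp hx Itr hsub
    rwa [TwoSidedIdeal.mem_mk'] at hmem
  · rintro ⟨r, rfl⟩
    exact TwoSidedIdeal.mul_mem_right _ t r
      (TwoSidedIdeal.subset_span (Set.mem_singleton t))

end Glue

/-- Let `R = ⊕_{n ≥ 0} R_n` be an `ℕ`-graded ring and `t ∈ R₁` a central homogeneous
element of degree `1` which is a non-zero-divisor.  If `R/tR` is right noetherian, then
`R` is right noetherian.  (Right noetherianity of a ring `A` is expressed as
`IsNoetherianRing Aᵐᵒᵖ`, and `R/tR` is the quotient of `R` by the two-sided ideal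
generated by `t`, which equals `tR` since `t` is central.) -/
theorem stmt8 {R : Type*} [Ring R] (𝒜 : ℕ → AddSubgroup R) [GradedRing 𝒜]
    (t : R) (ht : t ∈ 𝒜 1) (htc : ∀ r : R, t * r = r * t) (hreg : IsRegular t)
    (hquot : IsNoetherianRing ((TwoSidedIdeal.span {t}).ringCon.Quotient)ᵐᵒᵖ) :
    IsNoetherianRing Rᵐᵒᵖ := by
  classical
  set C := (TwoSidedIdeal.span ({t} : Set R)).ringCon with hC
  set S := C.Quotient with hS
  set π : R →+* S := C.mk' with hπ
  have hπsurj : Function.Surjective π := fun y => Quot.inductionOn y fun a => ⟨a, rfl⟩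
  have hπeq : ∀ x y : R, π x = π y ↔ ∃ r, x - y = t * r := by
    intro x y
    rw [show (π x = π y) ↔ C x y from RingCon.eq C, TwoSidedIdeal.rel_iff]
    exact stmt8_mem_tsi htc
  set T : Submodule Rᵐᵒᵖ R := Submodule.span Rᵐᵒᵖ ({t} : Set R) with hTdef
  -- pushforward of right ideals to the quotient
  set pushed : Submodule Rᵐᵒᵖ R → Submodule Sᵐᵒᵖ Sᵐᵒᵖ := fun K =>
    { carrier := {y | ∃ x ∈ K, op (π x) = y}
      add_mem' := by
        rintro _ _ ⟨x1, h1, rfl⟩ ⟨x2, h2, rfl⟩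
        exact ⟨x1 + x2, K.add_mem h1 h2, by rw [map_add, MulOpposite.op_add]⟩
      zero_mem' := ⟨0, K.zero_mem, by rw [map_zero, MulOpposite.op_zero]⟩
      smul_mem' := by
        rintro c _ ⟨x, hx, rfl⟩
        obtain ⟨a, ha⟩ := hπsurj c.unop
        refine ⟨x * a, K.smul_mem (op a) hx, ?_⟩
        rw [map_mul, ha, MulOpposite.op_mul, MulOpposite.op_unop, smul_eq_mul] } with hpushed
  have hpush_mem : ∀ (K : Submodule Rᵐᵒᵖ R) (x : R), x ∈ K → op (π x) ∈ pushed K :=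
    fun K x hx => ⟨x, hx, rfl⟩
  have hpush_mono : Monotone pushed := by
    intro K1 K2 h _ hy
    obtain ⟨x, hx, rfl⟩ := hy
    exact ⟨x, h hx, rfl⟩
  have hsep : ∀ (K : Submodule Rᵐᵒᵖ R), T ≤ K → ∀ x : R, op (π x) ∈ pushed K → x ∈ K := by
    intro K hTK x hx
    obtain ⟨x', hx', he⟩ := hx
    have hpe : π x' = π x := MulOpposite.op_injective he
    obtain ⟨r, hr⟩ := (hπeq x' x).mp hpe
    have hteq : x = x' - t * r := by rw [← hr]; abel
    rw [hteq]
    refine K.sub_mem hx' (hTK ?_)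
    exact stmt8_mem_T.mpr ⟨r, rfl⟩
  have hNoethS : IsNoetherian Sᵐᵒᵖ Sᵐᵒᵖ := hquot
  -- H1
  have H1 : ∀ K : Submodule Rᵐᵒᵖ R, T ≤ K →
      ∃ F : Finset R, (F : Set R) ⊆ K ∧ K ≤ Submodule.span Rᵐᵒᵖ (F : Set R) ⊔ T := by
    intro K hTK
    obtain ⟨Y, hY⟩ := IsNoetherian.noetherian (pushed K)
    have hYmem : ∀ y ∈ Y, ∃ x, x ∈ K ∧ op (π x) = y := by
      intro y hy
      have : y ∈ pushed K := hY ▸ Submodule.subset_span (Finset.mem_coe.mpr hy)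
      exact this
    choose! w hw1 hw2 using hYmem
    refine ⟨Y.image w, ?_, ?_⟩
    · intro f hf
      obtain ⟨y, hy, rfl⟩ := Finset.mem_image.mp hf
      exact hw1 y hy
    · intro x hx
      have h1 : op (π x) ∈ pushed K := hpush_mem K x hx
      have h2 : pushed K ≤ pushed (Submodule.span Rᵐᵒᵖ ((Y.image w : Finset R) : Set R) ⊔ T) := by
        rw [← hY, Submodule.span_le]
        intro y hy
        have hyY : y ∈ Y := hy
        rw [SetLike.mem_coe, ← hw2 y hyY]
        refine hpush_mem _ _ (Submodule.mem_sup_left (Submodule.subset_span ?_))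
        exact Finset.mem_coe.mpr (Finset.mem_image.mpr ⟨y, hyY, rfl⟩)
      exact hsep _ le_sup_right x (h2 h1)
  -- H2
  have H2 : ∀ c : ℕ →o Submodule Rᵐᵒᵖ R, (∀ n, T ≤ c n) →
      ∃ N : ℕ, ∀ n, N ≤ n → c n = c N := by
    intro c hTc
    obtain ⟨N, hsN⟩ := monotone_stabilizes_iff_noetherian.mpr hNoethS
      ⟨fun n => pushed (c n), fun n m h => hpush_mono (c.monotone h)⟩
    refine ⟨N, fun n hn => le_antisymm ?_ (c.monotone hn)⟩
    intro x hx
    have h1 : op (π x) ∈ pushed (c n) := hpush_mem _ x hx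
    have h2 : pushed (c n) = pushed (c N) := (hsN n hn).symm
    exact hsep (c N) (hTc N) x (h2 ▸ h1)
  -- conclude
  have hfg : ∀ I : Submodule Rᵐᵒᵖ R, I.FG :=
    stmt8_all_fg 𝒜 (fun J hJ => stmt8_graded_fg 𝒜 ht htc H1 H2 J hJ)
  have hReq : IsNoetherian Rᵐᵒᵖ R := isNoetherian_def.mpr hfg
  let e : R ≃ₗ[Rᵐᵒᵖ] Rᵐᵒᵖ :=
    { toFun := op
      invFun := unop
      left_inv := fun _ => rfl
      right_inv := fun _ => rfl
      map_add' := fun _ _ => rfl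
      map_smul' := fun _ _ => rfl }
  exact isNoetherian_of_linearEquiv e
end

section
/- Let A be an abelian category in which injective hulls exist. Let N be an object with injective hull E such that the quotient U = E/N is an artinian object. If Ext¹_A(T, N) = 0 for every simple object T of A, then N is injective (equivalently, N = E). -/
open CategoryTheory CategoryTheory.Limits

universe v u

/-!
If `E/N ≠ 0`, pick a simple `T ⊆ E/N` and pull `0 → N → E → E/N → 0` back along it to a
short exact sequence `0 → N → Z → T → 0` with `Z ⊆ E`. The vanishing of `Ext¹(T, N)` splits it,
so the complement of `N` in `Z` is a subobject of `E` meeting `N` trivially; by essentiality it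
is zero, hence `T = 0`, a contradiction. Thus `N = E`.
-/

variable {C : Type*} [Category C] [Abelian C]

def IsEssentialMono {N E : C} (i : N ⟶ E) : Prop :=
  ∀ (Y : C) (g : E ⟶ Y), Mono (i ≫ g) → Mono g

lemma IsEssentialMono.isZero_of_mono_comp_cokernel_π {N E K : C} {i : N ⟶ E}
    (hess : IsEssentialMono i) (k : K ⟶ E) [Mono k] (hk : Mono (i ≫ cokernel.π k)) :
    IsZero K := by
  have := hess _ _ hk
  exact IsZero.of_mono_eq_zero k ((cancel_mono (cokernel.π k)).mp (by simp))

/-- The kernel of `r` is a subobject of `E` meeting `N` trivially. -/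
lemma IsEssentialMono.mono_of_retraction {N Z E : C} {i : N ⟶ E} (hess : IsEssentialMono i)
    {f : N ⟶ Z} {s : Z ⟶ E} [Mono s] (hfs : f ≫ s = i) {r : Z ⟶ N} (hr : f ≫ r = 𝟙 N) :
    Mono r := by
  have hdisjoint : Mono (i ≫ cokernel.π (kernel.ι r ≫ s)) := by
    rw [Preadditive.mono_iff_cancel_zero]
    intro W t ht
    obtain ⟨u, hu⟩ : ∃ u, u ≫ kernel.ι r ≫ s = t ≫ i :=
      ⟨Abelian.monoLift _ (t ≫ i) (by simpa using ht), Abelian.monoLift_comp _ _ _⟩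
    have htf : t ≫ f = u ≫ kernel.ι r := by
      rw [← cancel_mono s, Category.assoc, Category.assoc, hfs, hu]
    calc t = t ≫ f ≫ r := by rw [hr, Category.comp_id]
      _ = 0 := by rw [← Category.assoc, htf, Category.assoc, kernel.condition, comp_zero]
  have hker := hess.isZero_of_mono_comp_cokernel_π (kernel.ι r ≫ s) hdisjoint
  exact Preadditive.mono_of_kernel_zero (hker.eq_of_src _ _)

section PullbackAlongCokernel

variable {N E T : C} (i : N ⟶ E) (a : T ⟶ cokernel i)

noncomputable abbrev pullbackCokernelShortComplex : ShortComplex C :=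
  ShortComplex.mk (pullback.lift 0 i (by rw [zero_comp, cokernel.condition]))
    (pullback.fst a (cokernel.π i)) (pullback.lift_fst _ _ _)

lemma pullbackCokernelShortComplex_f_comp_snd :
    (pullbackCokernelShortComplex i a).f ≫ pullback.snd a (cokernel.π i) = i :=
  pullback.lift_snd _ _ _

lemma pullbackCokernelShortComplex_shortExact [Mono i] :
    (pullbackCokernelShortComplex i a).ShortExact := by
  set S := pullbackCokernelShortComplex i a
  have hf : S.f ≫ pullback.snd a (cokernel.π i) = i := pullbackCokernelShortComplex_f_comp_snd i a
  have : Mono S.f := by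
    have : Mono (S.f ≫ pullback.snd a (cokernel.π i)) := by rw [hf]; infer_instance
    exact mono_of_mono _ (pullback.snd a (cokernel.π i))
  have : Epi S.g := inferInstanceAs (Epi (pullback.fst a (cokernel.π i)))
  refine ⟨S.exact_of_f_is_kernel (KernelFork.IsLimit.ofι _ S.zero
    (fun t ht => Abelian.monoLift i (t ≫ pullback.snd a (cokernel.π i)) ?_)
    (fun t ht => ?_) (fun t ht m hm => ?_))⟩
  · rw [Category.assoc, ← pullback.condition, ← Category.assoc]
    exact (congrArg (· ≫ a) ht).trans zero_comp
  · apply pullback.hom_ext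
    · simp only [Category.assoc, S, pullback.lift_fst, comp_zero]
      exact ht.symm
    · rw [Category.assoc, hf, Abelian.monoLift_comp]
  · rw [← cancel_mono i, Abelian.monoLift_comp, ← hm, Category.assoc, hf]

lemma IsEssentialMono.isZero_of_pullbackCokernel_split [Mono i] [Mono a]
    (hess : IsEssentialMono i)
    {r : pullback a (cokernel.π i) ⟶ N} (hr : (pullbackCokernelShortComplex i a).f ≫ r = 𝟙 N) :
    IsZero T := by
  have hS := pullbackCokernelShortComplex_shortExact i a
  have : Mono r := hess.mono_of_retraction (pullbackCokernelShortComplex_f_comp_snd i a) hr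
  have : IsSplitEpi r := ⟨⟨⟨_, hr⟩⟩⟩
  have : IsIso r := isIso_of_mono_of_epi r
  have : IsIso ((pullbackCokernelShortComplex i a).f ≫ r) := by rw [hr]; infer_instance
  have : IsIso (pullbackCokernelShortComplex i a).f := IsIso.of_isIso_comp_right _ r
  exact hS.isIso_f_iff.mp this

end PullbackAlongCokernel

theorem stmt18_general {A : Type u} [Category.{v} A] [Abelian A]
    (N E : A) [Injective E] (i : N ⟶ E) [Mono i]
    (hess : ∀ (Y : A) (g : E ⟶ Y), Mono (i ≫ g) → Mono g)
    (hart : IsArtinianObject (Limits.cokernel i))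
    (hext : ∀ (T : A), Simple T → ∀ (Z : A) (f : N ⟶ Z) (g : Z ⟶ T) (w : f ≫ g = 0),
      (ShortComplex.mk f g w).ShortExact → ∃ r : Z ⟶ N, f ≫ r = 𝟙 N) :
    Injective N ∧ IsIso i := by
  have hcoker : IsZero (cokernel i) := by
    by_contra hU
    obtain ⟨T, hT⟩ := exists_simple_subobject hU
    obtain ⟨r, hr⟩ := hext _ hT _ _ _ _ (pullbackCokernelShortComplex_shortExact i T.arrow)
    exact Simple.not_isZero _ (IsEssentialMono.isZero_of_pullbackCokernel_split i T.arrow hess hr)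
  have : Epi i := Preadditive.epi_of_isZero_cokernel i hcoker
  have : IsIso i := isIso_of_mono_of_epi i
  exact ⟨Injective.of_iso (asIso i).symm inferInstance, inferInstance⟩

/-- Let `A` be an abelian category in which injective hulls exist.  Let `N` be an object
with injective hull `i : N ⟶ E` (an essential monomorphism into an injective) such that
`U = E/N` is artinian.  If `Ext¹(T, N) = 0` for every simple `T` (i.e. every short exact
sequence `0 → N → Z → T → 0` with `T` simple splits), then `N` is injective
(equivalently, `i` is an isomorphism, `N = E`). -/
theorem stmt18 {A : Type u} [Category.{v} A] [Abelian A]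
    (hulls : ∀ X : A, ∃ (E : A) (i : X ⟶ E), Injective E ∧ Mono i ∧
      ∀ (Y : A) (g : E ⟶ Y), Mono (i ≫ g) → Mono g)
    (N E : A) [Injective E] (i : N ⟶ E) [Mono i]
    (hess : ∀ (Y : A) (g : E ⟶ Y), Mono (i ≫ g) → Mono g)
    (hart : IsArtinianObject (Limits.cokernel i))
    (hext : ∀ (T : A), Simple T → ∀ (Z : A) (f : N ⟶ Z) (g : Z ⟶ T) (w : f ≫ g = 0),
      (ShortComplex.mk f g w).ShortExact → ∃ r : Z ⟶ N, f ≫ r = 𝟙 N) :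
    Injective N ∧ IsIso i :=
  stmt18_general N E i hess hart hext
end
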